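/- The displacement interpolation between zero-mean Gaussians satisfies the geodesic property: for Σ_t = Σ₀^{-1/2}((1−t)Σ₀ + t(Σ₀^{1/2}Σ_fΣ₀^{1/2})^{1/2})² Σ₀^{-1/2} and the Gaussian Wasserstein distance d(A,B)² = trace(A + B − 2(A^{1/2}BA^{1/2})^{1/2}), one has d(Σ_s, Σ_t) = (t−s)·d(Σ₀, Σ_f) for all 0 ≤ s < t ≤ 1. -/

import Mathlib

/-!
With `R = Σ₀^{1/2}` and `T = R⁻¹ (R Σ_f R)^{1/2} R⁻¹`, the matrix `T` is positive definite,
`T Σ₀ T = Σ_f`, and `Σ_u = L_u Σ₀ L_u` for `L_u = (1 - u) I + u T`. Whenever `G ⪰ 0` and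
`G A G = B`, uniqueness of square roots gives `(A^{1/2} B A^{1/2})^{1/2} = A^{1/2} G A^{1/2}`, hence
`d(A, B)² = tr A + tr B - 2 tr (G A)`. Taking `G = T` for `(Σ₀, Σ_f)` and `G = L_t L_s⁻¹` for
`(Σ_s, Σ_t)` expresses both squared distances through `tr Σ₀`, `tr (T Σ₀)` and `tr (T Σ₀ T)`, and the
second is `(t - s)²` times the first.
-/

set_option autoImplicit false
open Matrix
noncomputable section

section
open scoped ComplexOrder

/-- The square root of a positive semidefinite matrix, as defined in Mathlib (Dec 2024),
since removed from Mathlib. -/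
noncomputable def Matrix.PosSemidef.sqrt {n 𝕜 : Type*} [Fintype n] [RCLike 𝕜] [DecidableEq n]
    {A : Matrix n n 𝕜} (hA : A.PosSemidef) : Matrix n n 𝕜 :=
  hA.1.eigenvectorUnitary.1 * diagonal ((↑) ∘ (√·) ∘ hA.1.eigenvalues) *
  (star hA.1.eigenvectorUnitary : Matrix n n 𝕜)

theorem Matrix.PosSemidef.posSemidef_sqrt {n 𝕜 : Type*} [Fintype n] [RCLike 𝕜] [DecidableEq n]
    {A : Matrix n n 𝕜} (hA : A.PosSemidef) : hA.sqrt.PosSemidef := by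
  apply PosSemidef.mul_mul_conjTranspose_same
  refine posSemidef_diagonal_iff.mpr fun i ↦ ?_
  rw [Function.comp_apply, RCLike.nonneg_iff]
  constructor
  · simp only [RCLike.ofReal_re]
    exact Real.sqrt_nonneg _
  · simp only [RCLike.ofReal_im]

end

/-- The middle matrix `Σ₀^{1/2} Σf Σ₀^{1/2}` is positive semidefinite. -/
theorem midPosSemidef {n : ℕ} {S0 Sf : Matrix (Fin n) (Fin n) ℝ}
    (h0 : S0.PosDef) (hf : Sf.PosDef) :
    (h0.posSemidef.sqrt * Sf * h0.posSemidef.sqrt).PosSemidef := by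
  have h := hf.posSemidef.mul_mul_conjTranspose_same h0.posSemidef.sqrt
  rwa [h0.posSemidef.posSemidef_sqrt.isHermitian] at h

/-- Displacement interpolation between `N(0,Σ₀)` and `N(0,Σf)` covariances:
`Σ_t = Σ₀^{-1/2}((1−t)Σ₀ + t(Σ₀^{1/2}ΣfΣ₀^{1/2})^{1/2})² Σ₀^{-1/2}`. -/
noncomputable def dispInterp {n : ℕ} {S0 Sf : Matrix (Fin n) (Fin n) ℝ}
    (h0 : S0.PosDef) (hf : Sf.PosDef) (t : ℝ) : Matrix (Fin n) (Fin n) ℝ :=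
  (h0.posSemidef.sqrt)⁻¹ * ((1 - t) • S0 + t • (midPosSemidef h0 hf).sqrt) ^ 2
    * (h0.posSemidef.sqrt)⁻¹


/-- The middle matrix for PSD matrices. -/
theorem midPosSemidef' {n : ℕ} {A B : Matrix (Fin n) (Fin n) ℝ}
    (hA : A.PosSemidef) (hB : B.PosSemidef) :
    (hA.sqrt * B * hA.sqrt).PosSemidef := by
  have h := hB.mul_mul_conjTranspose_same hA.sqrt
  rwa [hA.posSemidef_sqrt.isHermitian] at h

/-- The Bures–Wasserstein distance `d(A,B) = sqrt(trace(A + B − 2(A^{1/2}BA^{1/2})^{1/2}))`. -/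
noncomputable def bwDist {n : ℕ} (A B : Matrix (Fin n) (Fin n) ℝ)
    (hA : A.PosSemidef) (hB : B.PosSemidef) : ℝ :=
  Real.sqrt ((A + B - 2 • (midPosSemidef' hA hB).sqrt).trace)

namespace Matrix

variable {ι 𝕜 : Type*} [Fintype ι] [DecidableEq ι] [RCLike 𝕜] {A B G : Matrix ι ι 𝕜}

section sqrt

open scoped ComplexOrder MatrixOrder

theorem PosSemidef.sqrt_eq_cfcSqrt (hA : A.PosSemidef) : hA.sqrt = CFC.sqrt A := by
  rw [CFC.sqrt_eq_real_sqrt A hA.nonneg, cfcₙ_eq_cfc, hA.1.cfc_eq, IsHermitian.cfc,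
    Unitary.conjStarAlgAut_apply, PosSemidef.sqrt]

theorem PosSemidef.sqrt_mul_sqrt (hA : A.PosSemidef) : hA.sqrt * hA.sqrt = A := by
  rw [hA.sqrt_eq_cfcSqrt]
  exact CFC.sqrt_mul_sqrt_self A hA.nonneg

theorem PosSemidef.sqrt_eq_of_mul_self_eq (hA : A.PosSemidef) (hB : B.PosSemidef)
    (h : B * B = A) : hA.sqrt = B := by
  rw [hA.sqrt_eq_cfcSqrt]
  exact CFC.sqrt_unique h hB.nonneg

theorem PosSemidef.posDef_sqrt (hA : A.PosSemidef) (hA' : A.PosDef) : hA.sqrt.PosDef := by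
  rw [hA.posSemidef_sqrt.posDef_iff_isUnit]
  exact (IsUnit.mul_iff.mp (hA.sqrt_mul_sqrt.symm ▸ hA'.isUnit)).1

theorem PosDef.isUnit_det_sqrt (hA : A.PosDef) : IsUnit hA.posSemidef.sqrt.det :=
  (hA.posSemidef.posDef_sqrt hA).isUnit.map detMonoidHom

theorem PosSemidef.sqrt_sqrt_mul_mul_sqrt_of_mul_mul_eq (hA : A.PosSemidef)
    (hABA : (hA.sqrt * B * hA.sqrt).PosSemidef) (hG : G.PosSemidef) (hGAG : G * A * G = B) :
    hABA.sqrt = hA.sqrt * G * hA.sqrt := by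
  have hAGA : (hA.sqrt * G * hA.sqrt).PosSemidef := by
    simpa only [hA.posSemidef_sqrt.isHermitian.eq] using hG.mul_mul_conjTranspose_same hA.sqrt
  refine hABA.sqrt_eq_of_mul_self_eq hAGA ?_
  simp only [← hGAG, ← hA.sqrt_mul_sqrt, mul_assoc]

theorem PosSemidef.trace_sqrt_sqrt_mul_mul_sqrt_of_mul_mul_eq (hA : A.PosSemidef)
    (hABA : (hA.sqrt * B * hA.sqrt).PosSemidef) (hG : G.PosSemidef) (hGAG : G * A * G = B) :
    hABA.sqrt.trace = (G * A).trace := by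
  rw [hA.sqrt_sqrt_mul_mul_sqrt_of_mul_mul_eq hABA hG hGAG, trace_mul_cycle, hA.sqrt_mul_sqrt,
    trace_mul_comm]

end sqrt

end Matrix

theorem bwDist_eq_of_mul_mul_eq {n : ℕ} {A B G : Matrix (Fin n) (Fin n) ℝ}
    (hA : A.PosSemidef) (hB : B.PosSemidef) (hG : G.PosSemidef) (hGAG : G * A * G = B) :
    bwDist A B hA hB = √(A.trace + B.trace - 2 * (G * A).trace) := by
  rw [bwDist, trace_sub, trace_add, trace_smul,
    hA.trace_sqrt_sqrt_mul_mul_sqrt_of_mul_mul_eq _ hG hGAG, nsmul_eq_mul, Nat.cast_ofNat]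

section interpMap

variable {ι : Type*} [Fintype ι] [DecidableEq ι]

def interpMap (T : Matrix ι ι ℝ) (u : ℝ) : Matrix ι ι ℝ := (1 - u) • 1 + u • T

/-- The witness is `G = L_t L_s⁻¹` for `L = interpMap T`: as `L_s = T E = E T` with
`E = (1 - s) T⁻¹ + s`, it equals `((1 - t) / (1 - s)) • 1 + ((t - s) / (1 - s)) • E⁻¹`. -/
theorem exists_posSemidef_mul_interpMap {T : Matrix ι ι ℝ} (hT : T.PosDef) {s t : ℝ}
    (hs : 0 ≤ s) (hst : s ≤ t) (ht : t ≤ 1) (hs1 : s < 1) :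
    ∃ G : Matrix ι ι ℝ, G.PosSemidef ∧
      G * interpMap T s = interpMap T t ∧ interpMap T s * G = interpMap T t := by
  have hs1' : 1 - s ≠ 0 := (sub_pos.2 hs1).ne'
  have hTdet : IsUnit T.det := hT.isUnit.map detMonoidHom
  set E := (1 - s) • T⁻¹ + s • (1 : Matrix ι ι ℝ)
  have hE : E.PosDef := (hT.inv.smul (by linarith)).add_posSemidef (.smul .one hs)
  have hEdet : IsUnit E.det := hE.isUnit.map detMonoidHom
  have hTE : T * E = interpMap T s := by
    simp only [E, interpMap, Matrix.mul_add, Matrix.mul_smul, mul_nonsing_inv T hTdet, mul_one]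
  have hET : E * T = interpMap T s := by
    simp only [E, interpMap, Matrix.add_mul, Matrix.smul_mul, nonsing_inv_mul T hTdet, one_mul]
  have hEinv : E⁻¹ * interpMap T s = T := by rw [← hET, nonsing_inv_mul_cancel_left E _ hEdet]
  have hEinv' : interpMap T s * E⁻¹ = T := by rw [← hTE, mul_nonsing_inv_cancel_right E _ hEdet]
  refine ⟨((1 - t) / (1 - s)) • 1 + ((t - s) / (1 - s)) • E⁻¹,
    (PosSemidef.one.smul (div_nonneg (by linarith) (by linarith))).add
      (hE.inv.posSemidef.smul (div_nonneg (by linarith) (by linarith))), ?_, ?_⟩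
  · rw [Matrix.add_mul, Matrix.smul_mul, Matrix.smul_mul, one_mul, hEinv, interpMap, interpMap]
    match_scalars <;> field_simp
    ring
  · rw [Matrix.mul_add, Matrix.mul_smul, Matrix.mul_smul, mul_one, hEinv', interpMap, interpMap]
    match_scalars <;> field_simp
    ring

theorem trace_interpMap_mul_mul_interpMap (T A : Matrix ι ι ℝ) (u v : ℝ) :
    (interpMap T u * A * interpMap T v).trace = (1 - u) * (1 - v) * A.trace
      + ((1 - u) * v + u * (1 - v)) * (T * A).trace + u * v * (T * A * T).trace := by
  simp only [interpMap, Matrix.add_mul, Matrix.mul_add, Matrix.smul_mul, Matrix.mul_smul,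
    Matrix.one_mul, Matrix.mul_one, trace_add, trace_smul, smul_eq_mul, trace_mul_comm A T]
  ring

end interpMap

theorem bwDist_interpMap {n : ℕ} {A B T : Matrix (Fin n) (Fin n) ℝ}
    (hA : A.PosSemidef) (hB : B.PosSemidef) (hT : T.PosDef) (hTAT : T * A * T = B)
    {s t : ℝ} (hs : 0 ≤ s) (hst : s ≤ t) (ht : t ≤ 1) (hs1 : s < 1)
    {Ss St : Matrix (Fin n) (Fin n) ℝ}
    (hSs : interpMap T s * A * interpMap T s = Ss) (hSt : interpMap T t * A * interpMap T t = St)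
    (hSs' : Ss.PosSemidef) (hSt' : St.PosSemidef) :
    bwDist Ss St hSs' hSt' = (t - s) * bwDist A B hA hB := by
  obtain ⟨G, hG, hGL, hLG⟩ := exists_posSemidef_mul_interpMap hT hs hst ht hs1
  have hGSG : G * Ss * G = St := by
    rw [← hSs]
    calc G * (interpMap T s * A * interpMap T s) * G
        = G * interpMap T s * A * (interpMap T s * G) := by simp only [mul_assoc]
      _ = St := by rw [hGL, hLG, hSt]
  have hGSs : (G * Ss).trace = (interpMap T s * A * interpMap T t).trace := by
    rw [← hSs, trace_mul_comm, ← hLG]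
    simp only [mul_assoc]
  rw [bwDist_eq_of_mul_mul_eq hSs' hSt' hG hGSG, bwDist_eq_of_mul_mul_eq hA hB hT.posSemidef hTAT,
    hGSs, ← hSs, ← hSt, ← hTAT]
  simp only [trace_interpMap_mul_mul_interpMap]
  rw [← Real.sqrt_sq (sub_nonneg.2 hst), ← Real.sqrt_mul (sq_nonneg _)]
  congr 1
  ring

section gaussian

variable {n : ℕ} {S0 Sf : Matrix (Fin n) (Fin n) ℝ}

/-- The optimal transport map from `N(0, Σ₀)` to `N(0, Σ_f)`. -/
def otMap (h0 : S0.PosDef) (hf : Sf.PosDef) : Matrix (Fin n) (Fin n) ℝ :=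
  (h0.posSemidef.sqrt)⁻¹ * (midPosSemidef h0 hf).sqrt * (h0.posSemidef.sqrt)⁻¹

variable (h0 : S0.PosDef) (hf : Sf.PosDef)

theorem otMap_posDef : (otMap h0 hf).PosDef := by
  have hR : h0.posSemidef.sqrt.IsHermitian := h0.posSemidef.posSemidef_sqrt.isHermitian
  have hmid : (h0.posSemidef.sqrt * Sf * h0.posSemidef.sqrt).PosDef := by
    simpa only [star_eq_conjTranspose, hR.eq] using
      ((isUnit_iff_isUnit_det _).2 h0.isUnit_det_sqrt).posDef_star_right_conjugate_iff.2 hf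
  have hinv := (isUnit_iff_isUnit_det _).2 (isUnit_nonsing_inv_det _ h0.isUnit_det_sqrt)
  rw [otMap]
  simpa only [star_eq_conjTranspose, conjTranspose_nonsing_inv, hR.eq] using
    hinv.posDef_star_right_conjugate_iff.2 ((midPosSemidef h0 hf).posDef_sqrt hmid)

theorem otMap_mul_mul_otMap : otMap h0 hf * S0 * otMap h0 hf = Sf := by
  set R := h0.posSemidef.sqrt
  set M := (midPosSemidef h0 hf).sqrt
  have hR : IsUnit R.det := h0.isUnit_det_sqrt
  have hRR : R * R = S0 := h0.posSemidef.sqrt_mul_sqrt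
  have hMM : M * M = R * Sf * R := (midPosSemidef h0 hf).sqrt_mul_sqrt
  calc R⁻¹ * M * R⁻¹ * S0 * (R⁻¹ * M * R⁻¹)
      = R⁻¹ * (M * M) * R⁻¹ := by
        simp only [← hRR, mul_assoc, nonsing_inv_mul_cancel_left _ _ hR,
          mul_nonsing_inv_cancel_left _ _ hR]
    _ = Sf := by
        simp only [hMM, mul_assoc, nonsing_inv_mul_cancel_left _ _ hR, mul_nonsing_inv _ hR,
          mul_one]

theorem dispInterp_eq_interpMap (u : ℝ) :
    dispInterp h0 hf u = interpMap (otMap h0 hf) u * S0 * interpMap (otMap h0 hf) u := by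
  rw [dispInterp, otMap]
  set M := (midPosSemidef h0 hf).sqrt
  set R := h0.posSemidef.sqrt
  set L := interpMap (R⁻¹ * M * R⁻¹) u
  have hR : IsUnit R.det := h0.isUnit_det_sqrt
  have hRR : R * R = S0 := h0.posSemidef.sqrt_mul_sqrt
  have hRLR : (1 - u) • S0 + u • M = R * L * R := by
    simp only [L, interpMap, Matrix.mul_add, Matrix.add_mul, Matrix.mul_smul, Matrix.smul_mul,
      mul_one, hRR, mul_assoc, nonsing_inv_mul _ hR, mul_nonsing_inv_cancel_left _ _ hR]
  rw [hRLR, sq, ← hRR]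
  simp only [mul_assoc, nonsing_inv_mul_cancel_left _ _ hR, mul_nonsing_inv _ hR, mul_one]

end gaussian

/-- the displacement interpolation is a constant-speed geodesic:
`d(Σ_s, Σ_t) = (t − s)·d(Σ₀, Σf)` for all `0 ≤ s < t ≤ 1`. -/
theorem stmt4 {n : ℕ} (S0 Sf : Matrix (Fin n) (Fin n) ℝ)
    (h0 : S0.PosDef) (hf : Sf.PosDef) :
    ∀ s t : ℝ, 0 ≤ s → s < t → t ≤ 1 →
      ∀ (hs : (dispInterp h0 hf s).PosSemidef) (ht : (dispInterp h0 hf t).PosSemidef),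
        bwDist _ _ hs ht = (t - s) * bwDist S0 Sf h0.posSemidef hf.posSemidef := by
  intro s t hs0 hst ht1 hs ht
  exact bwDist_interpMap h0.posSemidef hf.posSemidef (otMap_posDef h0 hf)
    (otMap_mul_mul_otMap h0 hf) hs0 hst.le ht1 (hst.trans_le ht1)
    (dispInterp_eq_interpMap h0 hf s).symm (dispInterp_eq_interpMap h0 hf t).symm hs ht
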